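/- With the notation of the context, I(w) = (1/(bg))·I(h₆ + h₇) − (1/(g(2b+g)))·I(h₆ + 2h₇), where w(t,s) = −1/((t−1)(t−s)). -/

import Mathlib

open MeasureTheory

/-- The Dotsenko–Fateev weight `Φ(t,s) = |t|^a|s|^a|t−1|^b|s−1|^b|t−x|^c|s−y|^c|t−s|^g`. -/
noncomputable def dfWeight (a b c g x y : ℝ) (p : ℝ × ℝ) : ℝ :=
  |p.1| ^ a * |p.2| ^ a * |p.1 - 1| ^ b * |p.2 - 1| ^ b *
    |p.1 - x| ^ c * |p.2 - y| ^ c * |p.1 - p.2| ^ g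

/-- The complement in `ℝ²` of the seven lines `t=0, t=1, t=x, s=0, s=1, s=y, t=s`. -/
def dfComplement (x y : ℝ) : Set (ℝ × ℝ) :=
  {p | p.1 ≠ 0 ∧ p.1 ≠ 1 ∧ p.1 ≠ x ∧ p.2 ≠ 0 ∧ p.2 ≠ 1 ∧ p.2 ≠ y ∧ p.1 ≠ p.2}

/-- `I(h) = ∫_σ Φ h`. -/
noncomputable def dfInt (a b c g x y : ℝ) (σ : Set (ℝ × ℝ)) (h : ℝ × ℝ → ℝ) : ℝ :=
  ∫ p in σ, dfWeight a b c g x y p * h p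

/-- `h₁ = bc/((t−x)(s−1))`. -/
noncomputable def h1 (b c x : ℝ) (p : ℝ × ℝ) : ℝ := b * c / ((p.1 - x) * (p.2 - 1))

/-- `h₂ = bc/((t−1)(s−y))`. -/
noncomputable def h2 (b c y : ℝ) (p : ℝ × ℝ) : ℝ := b * c / ((p.1 - 1) * (p.2 - y))

/-- `h₃ = −cg/((t−x)(t−s))`. -/
noncomputable def h3 (c g x : ℝ) (p : ℝ × ℝ) : ℝ := -(c * g) / ((p.1 - x) * (p.1 - p.2))

/-- `h₄ = −cg/((s−y)(t−s))`. -/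
noncomputable def h4 (c g y : ℝ) (p : ℝ × ℝ) : ℝ := -(c * g) / ((p.2 - y) * (p.1 - p.2))

/-- `h₅ = c²/((t−x)(s−y))`. -/
noncomputable def h5 (c x y : ℝ) (p : ℝ × ℝ) : ℝ := c ^ 2 / ((p.1 - x) * (p.2 - y))

/-- `h₆ = −bg/((t−1)(t−s)) − bg/((s−1)(t−s))`. -/
noncomputable def h6 (b g : ℝ) (p : ℝ × ℝ) : ℝ :=
  -(b * g) / ((p.1 - 1) * (p.1 - p.2)) - b * g / ((p.2 - 1) * (p.1 - p.2))

/-- `h₇ = b²/((t−1)(s−1)) + bg/((s−1)(t−s))`. -/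
noncomputable def h7 (b g : ℝ) (p : ℝ × ℝ) : ℝ :=
  b ^ 2 / ((p.1 - 1) * (p.2 - 1)) + b * g / ((p.2 - 1) * (p.1 - p.2))

/-! On the chamber none of the denominators vanishes, and partial fractions give
`h₆ + h₇ = bg·w + b²·k` and `h₆ + 2h₇ = b(2b+g)·k` with `k = 1/((t−1)(s−1))`, so the identity is
linear algebra once `Φw` and `Φk` are integrable on `σ`. For `b, g > 1` the function `|u|^b/u`
extends continuously by `0` across `u = 0`, so `Φw` and `Φk` are continuous on all of `ℝ²`
(with Lean's `1/0 = 0`), hence integrable on the bounded set `σ`. -/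

open Filter Topology Set

theorem continuous_abs_rpow_div_self {b : ℝ} (hb : 1 < b) :
    Continuous fun u : ℝ => |u| ^ b / u := by
  have hpow : Continuous fun u : ℝ => |u| ^ (b - 1) :=
    continuous_abs.rpow_const fun _ => Or.inr (by linarith)
  refine continuous_iff_continuousAt.2 fun u => ?_
  rcases eq_or_ne u 0 with rfl | hu
  · have hbound (v : ℝ) : ‖|v| ^ b / v‖ ≤ |v| ^ (b - 1) := by
      rcases eq_or_ne v 0 with rfl | hv
      · simpa using Real.rpow_nonneg le_rfl _
      · rw [norm_div, Real.norm_eq_abs, Real.norm_eq_abs, abs_of_nonneg (by positivity),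
          Real.rpow_sub_one (abs_ne_zero.2 hv)]
    have hlim : Tendsto (fun v : ℝ => |v| ^ (b - 1)) (𝓝 0) (𝓝 0) := by
      simpa [Real.zero_rpow (by linarith : b - 1 ≠ 0)] using hpow.tendsto 0
    simpa [ContinuousAt] using squeeze_zero_norm hbound hlim
  · exact ((continuous_abs.rpow_const fun _ => Or.inr (by linarith)).continuousAt).div
      continuousAt_id hu

@[fun_prop]
theorem Continuous.abs_rpow_div_self {α : Type*} [TopologicalSpace α] {f : α → ℝ} {b : ℝ}
    (hb : 1 < b) (hf : Continuous f) : Continuous fun p => |f p| ^ b / f p :=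
  (continuous_abs_rpow_div_self hb).comp hf

theorem Continuous.integrableOn_of_isBounded {X E : Type*} [MetricSpace X] [ProperSpace X]
    [MeasurableSpace X] [OpensMeasurableSpace X] {μ : Measure X} [IsFiniteMeasureOnCompacts μ]
    [NormedAddCommGroup E] {f : X → E} {s : Set X} (hf : Continuous f)
    (hs : Bornology.IsBounded s) : IntegrableOn f s μ :=
  (hf.continuousOn.integrableOn_compact hs.isCompact_closure).mono_set subset_closure

theorem isOpen_dfComplement (x y : ℝ) : IsOpen (dfComplement x y) := by
  have hne {f f' : ℝ × ℝ → ℝ} (hf : Continuous f) (hf' : Continuous f') :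
      IsOpen {p | f p ≠ f' p} := isOpen_ne_fun hf hf'
  simp only [dfComplement, ofPred_and]
  exact (hne continuous_fst continuous_const).inter <| (hne continuous_fst continuous_const).inter <|
    (hne continuous_fst continuous_const).inter <| (hne continuous_snd continuous_const).inter <|
    (hne continuous_snd continuous_const).inter <| (hne continuous_snd continuous_const).inter <|
    hne continuous_fst continuous_snd

section Integrals

variable {a b c g x y : ℝ} {σ : Set (ℝ × ℝ)}

theorem continuous_dfWeight_mul_omega27 (ha : 0 ≤ a) (hb : 1 < b) (hc : 0 ≤ c) (hg : 1 < g) :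
    Continuous fun p : ℝ × ℝ => dfWeight a b c g x y p * (-1 / ((p.1 - 1) * (p.1 - p.2))) := by
  convert (by fun_prop (disch := linarith) : Continuous fun p : ℝ × ℝ =>
    -(|p.1| ^ a * |p.2| ^ a * (|p.1 - 1| ^ b / (p.1 - 1)) * |p.2 - 1| ^ b *
      |p.1 - x| ^ c * |p.2 - y| ^ c * (|p.1 - p.2| ^ g / (p.1 - p.2)))) using 2 with p
  simp only [dfWeight, div_eq_mul_inv, mul_inv]
  ring

theorem continuous_dfWeight_mul_one_div_sub_one_mul_sub_one (ha : 0 ≤ a) (hb : 1 < b) (hc : 0 ≤ c)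
    (hg : 0 ≤ g) :
    Continuous fun p : ℝ × ℝ => dfWeight a b c g x y p * (1 / ((p.1 - 1) * (p.2 - 1))) := by
  convert (by fun_prop (disch := linarith) : Continuous fun p : ℝ × ℝ =>
    |p.1| ^ a * |p.2| ^ a * (|p.1 - 1| ^ b / (p.1 - 1)) * (|p.2 - 1| ^ b / (p.2 - 1)) *
      |p.1 - x| ^ c * |p.2 - y| ^ c * |p.1 - p.2| ^ g) using 2 with p
  simp only [dfWeight, div_eq_mul_inv, mul_inv]
  ring

theorem dfInt_congr (hσ : MeasurableSet σ) {h h' : ℝ × ℝ → ℝ} (hh : EqOn h h' σ) :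
    dfInt a b c g x y σ h = dfInt a b c g x y σ h' :=
  setIntegral_congr_fun hσ fun p hp => by simp only [hh hp]

theorem dfInt_const_mul (r : ℝ) (h : ℝ × ℝ → ℝ) :
    dfInt a b c g x y σ (fun p => r * h p) = r * dfInt a b c g x y σ h := by
  simp only [dfInt, mul_left_comm _ r, integral_const_mul]

theorem dfInt_linear_combination {h h' : ℝ × ℝ → ℝ} (r r' : ℝ)
    (hi : IntegrableOn (fun p => dfWeight a b c g x y p * h p) σ)
    (hi' : IntegrableOn (fun p => dfWeight a b c g x y p * h' p) σ) :
    dfInt a b c g x y σ (fun p => r * h p + r' * h' p) =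
      r * dfInt a b c g x y σ h + r' * dfInt a b c g x y σ h' := by
  simp only [dfInt, mul_add, mul_left_comm _ r, mul_left_comm _ r',
    integral_add (hi.const_mul r) (hi'.const_mul r'), integral_const_mul]

end Integrals

theorem h6_add_h7 (b g : ℝ) (p : ℝ × ℝ) :
    h6 b g p + h7 b g p =
      b * g * (-1 / ((p.1 - 1) * (p.1 - p.2))) + b ^ 2 * (1 / ((p.1 - 1) * (p.2 - 1))) := by
  simp only [h6, h7]
  ring

theorem h6_add_two_mul_h7 (b g : ℝ) {p : ℝ × ℝ} (ht : p.1 ≠ 1) (hs : p.2 ≠ 1) (hts : p.1 ≠ p.2) :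
    h6 b g p + 2 * h7 b g p = b * (2 * b + g) * (1 / ((p.1 - 1) * (p.2 - 1))) := by
  have ht' : p.1 - 1 ≠ 0 := sub_ne_zero.2 ht
  have hs' : p.2 - 1 ≠ 0 := sub_ne_zero.2 hs
  have hts' : p.1 - p.2 ≠ 0 := sub_ne_zero.2 hts
  simp only [h6, h7]
  field_simp
  ring

theorem expansion_omega27_general (x y a b c g : ℝ)
    (ha : 1 < a) (hb : 1 < b) (hc : 1 < c) (hg : 1 < g)
    (σ : Set (ℝ × ℝ)) (hbd : Bornology.IsBounded σ)
    (hcc : ∃ p ∈ dfComplement x y, σ = connectedComponentIn (dfComplement x y) p) :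
    dfInt a b c g x y σ (fun p => -1 / ((p.1 - 1) * (p.1 - p.2))) =
      (1 / (b * g)) * dfInt a b c g x y σ (fun p => h6 b g p + h7 b g p)
        - (1 / (g * (2 * b + g))) * dfInt a b c g x y σ (fun p => h6 b g p + 2 * h7 b g p) := by
  obtain ⟨p₀, -, hσeq⟩ := hcc
  have hσ : MeasurableSet σ := hσeq ▸ (isOpen_dfComplement x y).connectedComponentIn.measurableSet
  have hsub : σ ⊆ dfComplement x y := hσeq ▸ connectedComponentIn_subset _ _
  have hω : IntegrableOn (fun p => dfWeight a b c g x y p * (-1 / ((p.1 - 1) * (p.1 - p.2)))) σ :=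
    (continuous_dfWeight_mul_omega27 (by linarith) hb (by linarith) hg).integrableOn_of_isBounded hbd
  have hκ : IntegrableOn (fun p => dfWeight a b c g x y p * (1 / ((p.1 - 1) * (p.2 - 1)))) σ :=
    (continuous_dfWeight_mul_one_div_sub_one_mul_sub_one (by linarith) hb (by linarith)
      (by linarith)).integrableOn_of_isBounded hbd
  have hI₁ : dfInt a b c g x y σ (fun p => h6 b g p + h7 b g p) =
      b * g * dfInt a b c g x y σ (fun p => -1 / ((p.1 - 1) * (p.1 - p.2))) +
        b ^ 2 * dfInt a b c g x y σ (fun p => 1 / ((p.1 - 1) * (p.2 - 1))) := by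
    simp only [h6_add_h7]
    exact dfInt_linear_combination _ _ hω hκ
  have hI₂ : dfInt a b c g x y σ (fun p => h6 b g p + 2 * h7 b g p) =
      b * (2 * b + g) * dfInt a b c g x y σ (fun p => 1 / ((p.1 - 1) * (p.2 - 1))) := by
    rw [← dfInt_const_mul]
    exact dfInt_congr hσ fun p hp =>
      have ⟨_, ht, _, _, hs, _, hts⟩ := hsub hp
      h6_add_two_mul_h7 b g ht hs hts
  have hb0 : b ≠ 0 := by positivity
  have hg0 : g ≠ 0 := by positivity
  have h2bg : 2 * b + g ≠ 0 := by positivity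
  rw [hI₁, hI₂]
  field_simp
  ring

/-- the cohomological expansion ω₂₇ ∼ (1/(bg))(η₆+η₇) − (1/(g(2b+g)))(η₆+2η₇)
integrated over a bounded chamber `σ` of the Dotsenko–Fateev arrangement. -/
theorem expansion_omega27 (x y a b c g : ℝ)
    (hx0 : x ≠ 0) (hx1 : x ≠ 1) (hy0 : y ≠ 0) (hy1 : y ≠ 1) (hxy : x ≠ y)
    (ha : 1 < a) (hb : 1 < b) (hc : 1 < c) (hg : 1 < g)
    (σ : Set (ℝ × ℝ)) (hbd : Bornology.IsBounded σ)
    (hcc : ∃ p ∈ dfComplement x y, σ = connectedComponentIn (dfComplement x y) p) :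
    dfInt a b c g x y σ (fun p => -1 / ((p.1 - 1) * (p.1 - p.2))) =
      (1 / (b * g)) * dfInt a b c g x y σ (fun p => h6 b g p + h7 b g p)
        - (1 / (g * (2 * b + g))) * dfInt a b c g x y σ (fun p => h6 b g p + 2 * h7 b g p) :=
  expansion_omega27_general x y a b c g ha hb hc hg σ hbd hcc
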